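/- Let g be a cusp form with multiplicative Hecke eigenvalues λ_g(n) satisfying the Hecke relation λ_g(ab) = Σ_{d | gcd(a,b)} μ(d) χ(d) λ_g(a/d) λ_g(b/d), and let d₁ be a squarefree positive integer. Then as formal Dirichlet series, Σ_m λ_g(d₁ m²) m^{−s} = λ_g(d₁) · ∏_{p | d₁} (1 + χ(p) p^{−s})^{−1} · Σ_m λ_g(m²) m^{−s}. -/

import Mathlib

open ArithmeticFunction Finset

/-!
Read backwards, the Hecke relation says `λ(a) λ(b) = ∑_{k ∣ (a, b)} χ(k) λ(ab / k²)`: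
substituting the relation for each `λ(ab / k²)` and collecting the terms over `m = k d` leaves
`∑_{d ∣ m} μ(d) = [m = 1]`. For squarefree `d₁` we have `(d₁, n²) = (d₁, n)`, so with `a = d₁`,
`b = n²` this reads `λ(d₁) λ(n²) = ∑_{e ∣ (d₁, n)} χ(e) λ(d₁ (n / e)²)`: the sequence
`λ(d₁) λ(n²)` is the Dirichlet convolution of `χ` restricted to the divisors of `d₁` with
`λ(d₁ m²)`. The Dirichlet series of the former is the finite Euler product
`∏_{p ∣ d₁} (1 + χ(p) p^{-s})`, and L-series of convolutions multiply.
-/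
open scoped LSeries.notation

namespace Nat

lemma filter_dvd_divisors_eq_divisors_gcd {m n : ℕ} (hn : n ≠ 0) :
    {e ∈ n.divisors | e ∣ m} = (n.gcd m).divisors := by
  ext e
  simp [Nat.dvd_gcd_iff, hn]

lemma gcd_pow_eq_gcd_of_squarefree {m n k : ℕ} (hm : Squarefree m) (hk : k ≠ 0) :
    m.gcd (n ^ k) = m.gcd n := by
  refine Nat.dvd_antisymm (Nat.dvd_gcd (Nat.gcd_dvd_left _ _) ?_)
    (Nat.gcd_dvd_gcd_of_dvd_right _ (dvd_pow_self n hk))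
  exact ((hm.squarefree_of_dvd (Nat.gcd_dvd_left _ _)).dvd_pow_iff_dvd hk).mp
    (Nat.gcd_dvd_right _ _)

end Nat

namespace ArithmeticFunction

/-- Substituting `j = N / k` and `H e = G (N / e)` turns the left side into
`∑_{j ∣ N} (μ ⋆ H) j`, which is `H N` by Möbius inversion. -/
theorem sum_divisors_sum_divisors_div_moebius_smul {M : Type*} [AddCommGroup M] {N : ℕ}
    (hN : N ≠ 0) (G : ℕ → M) :
    ∑ k ∈ N.divisors, ∑ d ∈ (N / k).divisors, moebius d • G (k * d) = G 1 := by
  have inversion := (sum_eq_iff_sum_smul_moebius_eq (f := fun j =>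
      ∑ x ∈ j.divisorsAntidiagonal, moebius x.1 • G (N / x.2)) (g := fun e => G (N / e))).mpr
    (fun _ _ => rfl) N (Nat.pos_of_ne_zero hN)
  rw [Nat.div_self (Nat.pos_of_ne_zero hN), ← Nat.sum_div_divisors] at inversion
  rw [← inversion]
  refine sum_congr rfl fun k hk => ?_
  rw [Nat.sum_divisorsAntidiagonal (fun d e => moebius d • G (N / e))]
  refine sum_congr rfl fun d hd => ?_
  have hkd : k * d ∣ N :=
    Nat.mul_dvd_of_dvd_div (Nat.dvd_of_mem_divisors hk) (Nat.dvd_of_mem_divisors hd)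
  rw [Nat.div_div_eq_div_mul, Nat.div_div_self hkd hN]

lemma isMultiplicative_toArithmeticFunction {R : Type*} [MonoidWithZero R] {f : ℕ → R}
    (h_one : f 1 = 1) (h_mul : ∀ a b, f (a * b) = f a * f b) :
    (toArithmeticFunction f).IsMultiplicative := by
  refine IsMultiplicative.iff_ne_zero.mpr ⟨by simp [toArithmeticFunction, h_one], ?_⟩
  intro m n hm hn _
  simp [toArithmeticFunction, hm, hn, h_mul]

end ArithmeticFunction

lemma LSeries.term_eq_mul_cpow_neg {n : ℕ} (hn : n ≠ 0) (f : ℕ → ℂ) (s : ℂ) :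
    LSeries.term f s n = f n * (n : ℂ) ^ (-s) := by
  rw [LSeries.term_of_ne_zero hn, Complex.cpow_neg, div_eq_mul_inv]

lemma LSeries_eq_tsum_pnat (f : ℕ → ℂ) (s : ℂ) :
    LSeries f s = ∑' n : ℕ+, f n * (n : ℂ) ^ (-s) := by
  rw [LSeries, ← tsum_pnat_eq_tsum_of_eq_zero (LSeries.term_zero f s)]
  exact tsum_congr fun n => LSeries.term_eq_mul_cpow_neg n.ne_zero f s

lemma LSeriesSummable_iff_summable_pnat (f : ℕ → ℂ) (s : ℂ) :
    LSeriesSummable f s ↔ Summable fun n : ℕ+ => f n * (n : ℂ) ^ (-s) := by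
  rw [LSeriesSummable, ← summable_pnat_iff_summable_nat]
  exact summable_congr fun n => LSeries.term_eq_mul_cpow_neg n.ne_zero f s

section DivisorRestricted

variable {χ : ℕ → ℂ} {d : ℕ}

lemma LSeriesSummable_ite_dvd (hd : d ≠ 0) (s : ℂ) :
    LSeriesSummable (fun e => if e ∣ d then χ e else 0) s := by
  refine summable_of_ne_finset_zero (s := d.divisors) fun e he => ?_
  rcases eq_or_ne e 0 with rfl | he0
  · rfl
  rw [LSeries.term_eq_mul_cpow_neg he0]
  simp_all

lemma LSeries_ite_dvd_eq_prod_primeFactors (hχ1 : χ 1 = 1)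
    (hχ : ∀ a b, χ (a * b) = χ a * χ b) (hd : Squarefree d) (s : ℂ) :
    LSeries (fun e => if e ∣ d then χ e else 0) s =
      ∏ p ∈ d.primeFactors, (1 + χ p * (p : ℂ) ^ (-s)) := by
  have h_mult : (toArithmeticFunction fun n => χ n * (n : ℂ) ^ (-s)).IsMultiplicative :=
    isMultiplicative_toArithmeticFunction (by simp [hχ1]) fun a b => by
      rw [hχ, Nat.cast_mul, Complex.natCast_mul_natCast_cpow]; ring
  have h_prod : ∏ p ∈ d.primeFactors, (1 + χ p * (p : ℂ) ^ (-s)) =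
      ∑ e ∈ d.divisors, toArithmeticFunction (fun n => χ n * (n : ℂ) ^ (-s)) e := by
    rw [← h_mult.prodPrimeFactors_one_add_of_squarefree hd]
    exact prod_congr rfl fun p hp => by
      simp [toArithmeticFunction, (Nat.prime_of_mem_primeFactors hp).ne_zero]
  rw [h_prod, LSeries, tsum_eq_sum (s := d.divisors)]
  · refine sum_congr rfl fun e he => ?_
    have he0 : e ≠ 0 := Nat.ne_of_gt (Nat.pos_of_mem_divisors he)
    rw [LSeries.term_eq_mul_cpow_neg he0]
    simp [toArithmeticFunction, he0, Nat.dvd_of_mem_divisors he]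
  · intro e he
    rcases eq_or_ne e 0 with rfl | he0
    · rfl
    rw [LSeries.term_eq_mul_cpow_neg he0]
    simp_all [hd.ne_zero]

end DivisorRestricted

def HeckeRelation (lam χ : ℕ → ℂ) : Prop :=
  ∀ a b : ℕ, 0 < a → 0 < b →
    lam (a * b) =
      ∑ d ∈ (a.gcd b).divisors, ((moebius d : ℤ) : ℂ) * χ d * lam (a / d) * lam (b / d)

namespace HeckeRelation

variable {lam χ : ℕ → ℂ}

lemma apply_eq_zero_of_forall_eq_zero (h : HeckeRelation lam χ) (hχ : ∀ d, χ d = 0) {n : ℕ}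
    (hn : 0 < n) : lam n = 0 := by
  simpa [hχ] using h n 1 hn one_pos

theorem mul_eq_sum_divisors_gcd (h : HeckeRelation lam χ) (hχ1 : χ 1 = 1)
    (hχ : ∀ a b, χ (a * b) = χ a * χ b) {a b : ℕ} (ha : 0 < a) (hb : 0 < b) :
    lam a * lam b = ∑ k ∈ (a.gcd b).divisors, χ k * lam (a / k * (b / k)) := by
  have hN : a.gcd b ≠ 0 := Nat.gcd_ne_zero_left ha.ne'
  have expand : ∀ k ∈ (a.gcd b).divisors, χ k * lam (a / k * (b / k)) =
      ∑ d ∈ (a.gcd b / k).divisors,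
        moebius d • (χ (k * d) * lam (a / (k * d)) * lam (b / (k * d))) := by
    intro k hk
    have hka : k ∣ a := (Nat.dvd_of_mem_divisors hk).trans (Nat.gcd_dvd_left a b)
    have hkb : k ∣ b := (Nat.dvd_of_mem_divisors hk).trans (Nat.gcd_dvd_right a b)
    rw [h _ _ (Nat.div_pos (Nat.le_of_dvd ha hka) (Nat.pos_of_dvd_of_pos hka ha))
      (Nat.div_pos (Nat.le_of_dvd hb hkb) (Nat.pos_of_dvd_of_pos hka ha)), Nat.gcd_div hka hkb,
      mul_sum]
    refine sum_congr rfl fun d _ => ?_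
    rw [zsmul_eq_mul, hχ, Nat.div_div_eq_div_mul, Nat.div_div_eq_div_mul]
    ring
  rw [sum_congr rfl expand, sum_divisors_sum_divisors_div_moebius_smul hN
    fun m => χ m * lam (a / m) * lam (b / m), hχ1, Nat.div_one, Nat.div_one, one_mul]

theorem mul_sq_eq_sum_divisors_gcd_of_squarefree (h : HeckeRelation lam χ) (hχ1 : χ 1 = 1)
    (hχ : ∀ a b, χ (a * b) = χ a * χ b) {d : ℕ} (hd : Squarefree d) {n : ℕ} (hn : 0 < n) :
    lam d * lam (n ^ 2) = ∑ e ∈ (d.gcd n).divisors, χ e * lam (d * (n / e) ^ 2) := by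
  rw [h.mul_eq_sum_divisors_gcd hχ1 hχ (Nat.pos_of_ne_zero hd.ne_zero) (pow_pos hn 2),
    Nat.gcd_pow_eq_gcd_of_squarefree hd two_ne_zero]
  refine sum_congr rfl fun e he => ?_
  obtain ⟨c, rfl⟩ := (Nat.dvd_gcd_iff.mp (Nat.dvd_of_mem_divisors he)).1
  obtain ⟨m, rfl⟩ := (Nat.dvd_gcd_iff.mp (Nat.dvd_of_mem_divisors he)).2
  have he0 : 0 < e := Nat.pos_of_ne_zero (left_ne_zero_of_mul hd.ne_zero)
  rw [mul_pow, sq e, mul_assoc, Nat.mul_div_cancel_left _ he0, Nat.mul_div_cancel_left _ he0,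
    Nat.mul_div_cancel_left _ he0]
  ring_nf

theorem convolution_ite_dvd_apply (h : HeckeRelation lam χ) (hχ1 : χ 1 = 1)
    (hχ : ∀ a b, χ (a * b) = χ a * χ b) {d : ℕ} (hd : Squarefree d) {n : ℕ} (hn : n ≠ 0) :
    ((fun e => if e ∣ d then χ e else 0) ⍟ fun m => lam (d * m ^ 2)) n =
      lam d * lam (n ^ 2) := by
  simp only [LSeries.convolution_def]
  rw [Nat.sum_divisorsAntidiagonal
    fun e m => (if e ∣ d then χ e else 0) * lam (d * m ^ 2)]
  simp only [ite_mul, zero_mul]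
  rw [← sum_filter, Nat.filter_dvd_divisors_eq_divisors_gcd hn, Nat.gcd_comm,
    h.mul_sq_eq_sum_divisors_gcd_of_squarefree hχ1 hχ hd (Nat.pos_of_ne_zero hn)]

end HeckeRelation

theorem hecke_square_dirichlet_series_general (lam : ℕ → ℂ) (χ : ℕ → ℂ)
    (hχ : ∀ a b : ℕ, χ (a * b) = χ a * χ b)
    (hHecke : ∀ a b : ℕ, 0 < a → 0 < b →
      lam (a * b) = ∑ d ∈ (Nat.gcd a b).divisors,
        ((moebius d : ℤ) : ℂ) * χ d * lam (a / d) * lam (b / d))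
    (d₁ : ℕ) (hd₁ : Squarefree d₁) (s : ℂ)
    (h₁ : Summable fun m : ℕ+ => ‖lam (d₁ * (m : ℕ) ^ 2) * ((m : ℕ) : ℂ) ^ (-s)‖) :
    (∏ p ∈ d₁.primeFactors, (1 + χ p * ((p : ℕ) : ℂ) ^ (-s))) *
        ∑' m : ℕ+, lam (d₁ * (m : ℕ) ^ 2) * ((m : ℕ) : ℂ) ^ (-s) =
      lam d₁ * ∑' m : ℕ+, lam ((m : ℕ) ^ 2) * ((m : ℕ) : ℂ) ^ (-s) := by
  by_cases hχ1 : χ 1 = 1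
  · have hB : LSeriesSummable (fun m => lam (d₁ * m ^ 2)) s :=
      (LSeriesSummable_iff_summable_pnat _ s).mpr h₁.of_norm
    calc _ = LSeries (fun e => if e ∣ d₁ then χ e else 0) s *
            LSeries (fun m => lam (d₁ * m ^ 2)) s := by
          rw [LSeries_ite_dvd_eq_prod_primeFactors hχ1 hχ hd₁ s,
            LSeries_eq_tsum_pnat (fun m => lam (d₁ * m ^ 2))]
      _ = LSeries ((fun e => if e ∣ d₁ then χ e else 0) ⍟ fun m => lam (d₁ * m ^ 2)) s :=
          (LSeries_convolution' (LSeriesSummable_ite_dvd hd₁.ne_zero s) hB).symm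
      _ = LSeries (lam d₁ • fun n => lam (n ^ 2)) s :=
          LSeries_congr (fun hn => HeckeRelation.convolution_ite_dvd_apply hHecke hχ1 hχ hd₁ hn) s
      _ = _ := by rw [LSeries_smul, LSeries_eq_tsum_pnat]
  · have hχ0 : ∀ d, χ d = 0 := fun d => by
      have h1 : χ 1 * (χ 1 - 1) = 0 := by linear_combination (hχ 1 1).symm
      rw [← mul_one d, hχ, (mul_eq_zero.mp h1).resolve_right (sub_ne_zero.mpr hχ1), mul_zero]
    have hlam : ∀ {n}, 0 < n → lam n = 0 :=
      HeckeRelation.apply_eq_zero_of_forall_eq_zero hHecke hχ0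
    simp [hlam, Nat.pos_iff_ne_zero, hd₁.ne_zero]

theorem hecke_square_dirichlet_series (lam : ℕ → ℂ) (χ : ℕ → ℂ)
    (hχ : ∀ a b : ℕ, χ (a * b) = χ a * χ b)
    (hHecke : ∀ a b : ℕ, 0 < a → 0 < b →
      lam (a * b) = ∑ d ∈ (Nat.gcd a b).divisors,
        ((moebius d : ℤ) : ℂ) * χ d * lam (a / d) * lam (b / d))
    (d₁ : ℕ) (hd₁ : Squarefree d₁) (s : ℂ)
    (h₁ : Summable fun m : ℕ+ => ‖lam (d₁ * (m : ℕ) ^ 2) * ((m : ℕ) : ℂ) ^ (-s)‖)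
    (h₂ : Summable fun m : ℕ+ => ‖lam ((m : ℕ) ^ 2) * ((m : ℕ) : ℂ) ^ (-s)‖) :
    (∏ p ∈ d₁.primeFactors, (1 + χ p * ((p : ℕ) : ℂ) ^ (-s))) *
        ∑' m : ℕ+, lam (d₁ * (m : ℕ) ^ 2) * ((m : ℕ) : ℂ) ^ (-s) =
      lam d₁ * ∑' m : ℕ+, lam ((m : ℕ) ^ 2) * ((m : ℕ) : ℂ) ^ (-s) :=
  hecke_square_dirichlet_series_general lam χ hχ hHecke d₁ hd₁ s h₁
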